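/- Fix n ≥ 2 and τ ≥ n, and let A_n(τ) denote the set of real numbers x in a fixed bounded interval I for which |x − α| < H(α)^{−τ−1} holds for infinitely many real algebraic numbers α of degree exactly n over ℚ, where H(α) is the maximum absolute value of the coefficients of the minimal integer polynomial of α. Then for any s > (n+1)/(τ+1), the s-dimensional Hausdorff measure of A_n(τ) is zero; hence dimH A_n(τ) ≤ (n+1)/(τ+1). -/

import Mathlib

/-!
Every real algebraic number `α` of degree `n` is a root of a nonzero integer polynomial of
degree `n` whose coefficient vector `v ∈ ℤⁿ⁺¹` has sup-norm at most `H(α)`, and one vector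
accounts for at most `n` such roots. Hence `∑_α H(α)^(-σ) ≤ n ∑_{v ∈ ℤⁿ⁺¹} ‖v‖^(-σ)`, which is
finite for `σ > n + 1` (lattice-point counting). With `σ = (τ + 1) s` this says that the
intervals of radius `H(α)^(-τ-1)` around the `α` satisfy `∑ diam^s < ∞`, so by the
Hausdorff–Cantelli lemma the set of points lying in infinitely many of them is `μH[s]`-null.
-/

open MeasureTheory

/-- The (naive) height of an integer polynomial: the maximum absolute value of its
coefficients. -/
noncomputable def polyHeight (P : Polynomial ℤ) : ℕ :=
  (Finset.range (P.natDegree + 1)).sup fun i => (P.coeff i).natAbs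

/-- `α` is a real algebraic number of degree exactly `n` over `ℚ`. -/
def IsAlgebraicOfDegree (n : ℕ) (α : ℝ) : Prop :=
  (∃ P : Polynomial ℤ, P ≠ 0 ∧ P.natDegree = n ∧ Polynomial.aeval α P = 0) ∧
    ∀ Q : Polynomial ℤ, Q ≠ 0 → Q.natDegree < n → Polynomial.aeval α Q ≠ 0

/-- The height of an algebraic number `α` of degree `n`: the least height of a nonzero
degree-`n` integer polynomial vanishing at `α` (equivalently, the height of the minimal
integer polynomial of `α`). -/
noncomputable def algHeight (n : ℕ) (α : ℝ) : ℕ :=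
  sInf {h : ℕ | ∃ P : Polynomial ℤ, P ≠ 0 ∧ P.natDegree = n ∧
    Polynomial.aeval α P = 0 ∧ polyHeight P = h}

open Polynomial Filter Topology
open scoped ENNReal

theorem hausdorffMeasure_setOf_infinite_mem_eq_zero {X ι : Type*} [EMetricSpace X]
    [MeasurableSpace X] [BorelSpace X] [Countable ι] {s : ℝ} (hs : 0 < s) (U : ι → Set X)
    (hU : ∑' i, Metric.ediam (U i) ^ s ≠ ∞) :
    μH[s] {x | {i | x ∈ U i}.Infinite} = 0 := by
  set tail : Finset ι → ℝ≥0∞ := fun F => ∑' i : {i // i ∉ F}, Metric.ediam (U i) ^ s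
  have htail : Tendsto tail atTop (𝓝 0) := ENNReal.tendsto_tsum_compl_atTop_zero hU
  have hdiam : ∀ F (i : {i // i ∉ F}), Metric.ediam (U i) ≤ tail F ^ s⁻¹ := fun F i =>
    calc Metric.ediam (U i) = (Metric.ediam (U i) ^ s) ^ s⁻¹ := by
          rw [ENNReal.rpow_rpow_inv hs.ne']
      _ ≤ tail F ^ s⁻¹ := ENNReal.rpow_le_rpow (ENNReal.le_tsum i) (inv_nonneg.2 hs.le)
  have hdiam_tendsto : Tendsto (fun F => tail F ^ s⁻¹) atTop (𝓝 0) := by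
    rw [← ENNReal.zero_rpow_of_pos (inv_pos.2 hs)]
    exact (ENNReal.continuous_rpow_const.tendsto 0).comp htail
  have hcover :
      ∀ F : Finset ι, {x | {i | x ∈ U i}.Infinite} ⊆ ⋃ i : {i // i ∉ F}, U i := by
    intro F x hx
    obtain ⟨i, hxi, hiF⟩ := hx.exists_notMem_finset F
    exact Set.mem_iUnion.2 ⟨⟨i, hiF⟩, hxi⟩
  refine le_antisymm ?_ zero_le
  calc μH[s] _ ≤ liminf tail atTop :=
        Measure.hausdorffMeasure_le_liminf_tsum s _ _ hdiam_tendsto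
          (fun F (i : {i // i ∉ F}) => U i) (.of_forall hdiam) (.of_forall hcover)
    _ = 0 := htail.liminf_eq

theorem dimH_le_of_forall_hausdorffMeasure_eq_zero {X : Type*} [EMetricSpace X]
    [MeasurableSpace X] [BorelSpace X] {s : Set X} {D : ℝ}
    (h : ∀ d : ℝ, D < d → μH[d] s = 0) : dimH s ≤ ENNReal.ofReal D :=
  dimH_le fun d hd => le_of_not_gt fun hlt => by
    rw [← ENNReal.ofReal_coe_nnreal, ENNReal.ofReal_lt_ofReal_iff'] at hlt
    simp [h d hlt.1] at hd

theorem summable_norm_rpow_pi_int {ι : Type*} [Fintype ι] {r : ℝ}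
    (hr : r < -Fintype.card ι) :
    Summable fun v : ι → ℤ => ‖v‖ ^ r := by
  let b := Pi.basisFun ℝ ι
  let e := (b.restrictScalars ℤ).equivFun
  have hrank : Module.finrank ℤ (Submodule.span ℤ (Set.range b)) = Fintype.card ι :=
    Module.finrank_eq_card_basis (b.restrictScalars ℤ)
  have hL := ZLattice.summable_norm_rpow (Submodule.span ℤ (Set.range b)) r (hrank ▸ hr)
  refine e.toEquiv.summable_iff.mp (hL.congr fun z => ?_)
  show ‖z‖ ^ r = ‖e z‖ ^ r
  have hcoord : (z : ι → ℝ) = fun i => (e z i : ℝ) := funext fun i => by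
    simpa [b, e] using (b.restrictScalars_repr_apply ℤ z i).symm
  rw [Submodule.coe_norm, hcoord, Pi.norm_def, Pi.norm_def]
  congr 2

theorem exists_polyHeight_eq_algHeight {n : ℕ} {α : ℝ} (hα : IsAlgebraicOfDegree n α) :
    ∃ P : ℤ[X], P ≠ 0 ∧ P.natDegree = n ∧ aeval α P = 0 ∧
      polyHeight P = algHeight n α :=
  let ⟨P, hP0, hPn, hPα⟩ := hα.1
  Nat.sInf_mem
    (s := {h | ∃ P : ℤ[X], P ≠ 0 ∧ P.natDegree = n ∧ aeval α P = 0 ∧ polyHeight P = h})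
    ⟨_, P, hP0, hPn, hPα, rfl⟩

instance (n : ℕ) : Countable {α : ℝ // IsAlgebraicOfDegree n α} :=
  Set.Countable.to_subtype <| (Algebraic.countable ℤ ℝ).mono fun _ hα =>
    let ⟨P, hP0, _, hPα⟩ := hα.1
    show IsAlgebraic ℤ _ from ⟨P, hP0, hPα⟩

def coeffVec (n : ℕ) (P : ℤ[X]) : Fin (n + 1) → ℤ := fun i => P.coeff i

theorem natAbs_coeff_le_polyHeight (P : ℤ[X]) (k : ℕ) :
    (P.coeff k).natAbs ≤ polyHeight P := by
  rcases le_or_gt k P.natDegree with hk | hk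
  · exact Finset.le_sup (f := fun i => (P.coeff i).natAbs) (Finset.mem_range_succ_iff.2 hk)
  · simp [coeff_eq_zero_of_natDegree_lt hk]

theorem norm_coeffVec_le_polyHeight (n : ℕ) (P : ℤ[X]) : ‖coeffVec n P‖ ≤ polyHeight P :=
  (pi_norm_le_iff_of_nonneg (Nat.cast_nonneg _)).2 fun i => by
    rw [coeffVec, Int.norm_eq_abs, ← Int.cast_abs, ← Nat.cast_natAbs]
    exact_mod_cast natAbs_coeff_le_polyHeight P i

theorem coeffVec_ne_zero {n : ℕ} {P : ℤ[X]} (hP : P ≠ 0) (hPn : P.natDegree = n) :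
    coeffVec n P ≠ 0 := fun h => hP <| by
  simpa [coeffVec, ← hPn] using congrFun h (Fin.last n)

theorem eq_of_coeffVec_eq {n : ℕ} {P Q : ℤ[X]} (hP : P.natDegree ≤ n) (hQ : Q.natDegree ≤ n)
    (h : coeffVec n P = coeffVec n Q) : P = Q :=
  (ext_iff_natDegree_le hP hQ).2 fun i hi => congrFun h ⟨i, Nat.lt_succ_of_le hi⟩

theorem encard_preimage_coeffVec_le {ι : Type*} {n : ℕ} {x : ι → ℝ}
    (hx : Function.Injective x) {P : ι → ℤ[X]} (hP0 : ∀ i, P i ≠ 0)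
    (hPn : ∀ i, (P i).natDegree = n) (hroot : ∀ i, aeval (x i) (P i) = 0)
    (w : Fin (n + 1) → ℤ) :
    ENat.card ((coeffVec n ∘ P) ⁻¹' {w}) ≤ n := by
  rcases isEmpty_or_nonempty ((coeffVec n ∘ P) ⁻¹' {w}) with hempty | ⟨i₀, hi₀⟩
  · simp [(ENat.card_eq_zero_iff_empty _).2 hempty]
  have hP : ∀ i ∈ (coeffVec n ∘ P) ⁻¹' {w}, P i = P i₀ := fun i hi =>
    eq_of_coeffVec_eq (hPn i).le (hPn i₀).le (hi.trans hi₀.symm)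
  let root : (coeffVec n ∘ P) ⁻¹' {w} → ((P i₀).aroots ℝ).toFinset := fun i =>
    ⟨x i, Multiset.mem_toFinset.2 (mem_aroots.2 ⟨hP0 i₀, hP i i.2 ▸ hroot i⟩)⟩
  have hroot_inj : Function.Injective root := fun i j h =>
    Subtype.val_injective (hx (congrArg Subtype.val h :))
  calc ENat.card ((coeffVec n ∘ P) ⁻¹' {w})
      ≤ ENat.card ((P i₀).aroots ℝ).toFinset := ENat.card_le_card_of_injective hroot_inj
    _ ≤ n := by
      rw [ENat.card_eq_coe_fintype_card, Fintype.card_coe, ← hPn i₀]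
      exact_mod_cast (Multiset.toFinset_card_le _).trans (card_roots_map_le_natDegree _)

theorem tsum_algHeight_rpow_ne_top {n : ℕ} {σ : ℝ} (hσ : n + 1 < σ) :
    ∑' α : {α : ℝ // IsAlgebraicOfDegree n α},
      ENNReal.ofReal ((algHeight n α : ℝ) ^ (-σ)) ≠ ∞ := by
  choose P hP0 hPn hProot hPheight using
    fun α : {α : ℝ // IsAlgebraicOfDegree n α} => exists_polyHeight_eq_algHeight α.2
  set v := coeffVec n ∘ P
  have hfiber : ∀ w, ENat.card (v ⁻¹' {w}) ≤ n :=
    encard_preimage_coeffVec_le Subtype.val_injective hP0 hPn hProot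
  have hsum : Summable fun w : Fin (n + 1) → ℤ => ‖w‖ ^ (-σ) :=
    summable_norm_rpow_pi_int (by rw [Fintype.card_fin, Nat.cast_add_one]; linarith)
  refine ne_of_lt ?_
  calc ∑' α : {α : ℝ // IsAlgebraicOfDegree n α},
        ENNReal.ofReal ((algHeight n α : ℝ) ^ (-σ))
      ≤ ∑' α, ENNReal.ofReal (‖v α‖ ^ (-σ)) := ENNReal.tsum_le_tsum fun α =>
        ENNReal.ofReal_le_ofReal <| Real.rpow_le_rpow_of_nonpos
          (norm_pos_iff.2 (coeffVec_ne_zero (hP0 α) (hPn α)))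
          (hPheight α ▸ norm_coeffVec_le_polyHeight n (P α)) (by linarith)
    _ = ∑' w, ∑' α : v ⁻¹' {w}, ENNReal.ofReal (‖v α‖ ^ (-σ)) :=
        (ENNReal.tsum_fiberwise _ v).symm
    _ = ∑' w, ENat.card (v ⁻¹' {w}) * ENNReal.ofReal (‖w‖ ^ (-σ)) := by
        refine tsum_congr fun w => ?_
        rw [← ENNReal.tsum_const]
        exact tsum_congr fun α => by rw [α.2]
    _ ≤ ∑' w, n * ENNReal.ofReal (‖w‖ ^ (-σ)) := ENNReal.tsum_le_tsum fun w =>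
        mul_le_mul_left (by exact_mod_cast hfiber w) _
    _ = n * ENNReal.ofReal (∑' w, ‖w‖ ^ (-σ)) := by
        rw [ENNReal.tsum_mul_left, ENNReal.ofReal_tsum_of_nonneg (fun _ => by positivity) hsum]
    _ < ∞ := ENNReal.mul_lt_top (by simp) ENNReal.ofReal_lt_top

theorem tsum_ediam_ball_algHeight_rpow_ne_top {n : ℕ} {τ s : ℝ} (hs : 0 < s)
    (hσ : n + 1 < (τ + 1) * s) :
    ∑' α : {α : ℝ // IsAlgebraicOfDegree n α},
      Metric.ediam (Metric.ball (α : ℝ) ((algHeight n α : ℝ) ^ (-τ - 1))) ^ s ≠ ∞ := by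
  have hball : ∀ α : {α : ℝ // IsAlgebraicOfDegree n α},
      Metric.ediam (Metric.ball (α : ℝ) ((algHeight n α : ℝ) ^ (-τ - 1))) ^ s =
        ENNReal.ofReal (2 ^ s) * ENNReal.ofReal ((algHeight n α : ℝ) ^ (-((τ + 1) * s))) := by
    intro α
    have hH : (0 : ℝ) ≤ algHeight n α := Nat.cast_nonneg _
    set r := (algHeight n α : ℝ) ^ (-τ - 1)
    have hr : 0 ≤ r := by positivity
    rw [Real.ball_eq_Ioo, Real.ediam_Ioo, show (α : ℝ) + r - (α - r) = 2 * r by ring,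
      ENNReal.ofReal_rpow_of_nonneg (by positivity) hs.le, ← ENNReal.ofReal_mul (by positivity),
      Real.mul_rpow zero_le_two hr, ← Real.rpow_mul hH]
    ring_nf
  rw [tsum_congr hball, ENNReal.tsum_mul_left]
  exact ENNReal.mul_ne_top ENNReal.ofReal_ne_top (tsum_algHeight_rpow_ne_top hσ)

theorem hausdorffMeasure_setOf_infinite_algebraic_approx_eq_zero {n : ℕ} {τ s : ℝ}
    (hτ : 0 < τ + 1) (hs : (n + 1) / (τ + 1) < s) :
    μH[s] {x : ℝ | {α : ℝ | IsAlgebraicOfDegree n α ∧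
      |x - α| < (algHeight n α : ℝ) ^ (-τ - 1)}.Infinite} = 0 := by
  have hs0 : 0 < s := (div_pos (by positivity) hτ).trans hs
  let U : {α : ℝ // IsAlgebraicOfDegree n α} → Set ℝ := fun α =>
    Metric.ball (α : ℝ) ((algHeight n α : ℝ) ^ (-τ - 1))
  have hU := tsum_ediam_ball_algHeight_rpow_ne_top hs0 (by rwa [div_lt_iff₀ hτ, mul_comm] at hs)
  refine measure_mono_null (fun x hx => ?_)
    (hausdorffMeasure_setOf_infinite_mem_eq_zero hs0 U hU)
  refine fun hfin => hx <| (hfin.image Subtype.val).subset fun α hα => ⟨⟨α, hα.1⟩, ?_, rfl⟩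
  simpa [U, Real.dist_eq] using hα.2

theorem baker_schmidt_upper_general (n : ℕ) (τ : ℝ) (hτ : (n : ℝ) ≤ τ)
    (a b : ℝ) :
    (∀ s : ℝ, ((n : ℝ) + 1) / (τ + 1) < s →
      μH[s] {x : ℝ | x ∈ Set.Icc a b ∧
        {α : ℝ | IsAlgebraicOfDegree n α ∧
          |x - α| < (algHeight n α : ℝ) ^ (-τ - 1)}.Infinite} = 0) ∧
      dimH {x : ℝ | x ∈ Set.Icc a b ∧
        {α : ℝ | IsAlgebraicOfDegree n α ∧
          |x - α| < (algHeight n α : ℝ) ^ (-τ - 1)}.Infinite} ≤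
        ENNReal.ofReal (((n : ℝ) + 1) / (τ + 1)) := by
  have hτ1 : 0 < τ + 1 := by linarith [n.cast_nonneg (α := ℝ)]
  refine ⟨fun s hs => ?_, dimH_le_of_forall_hausdorffMeasure_eq_zero fun s hs => ?_⟩ <;>
    exact measure_mono_null (fun _ hx => hx.2)
      (hausdorffMeasure_setOf_infinite_algebraic_approx_eq_zero hτ1 hs)

/-- Baker–Schmidt upper bound: for `τ ≥ n`, the set of `x` in a bounded interval `[a,b]`
admitting infinitely many approximations `|x − α| < H(α)^{−τ−1}` by real algebraic
numbers `α` of degree exactly `n` has `H^s`-measure zero for every `s > (n+1)/(τ+1)`,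
hence Hausdorff dimension at most `(n+1)/(τ+1)`. -/
theorem baker_schmidt_upper (n : ℕ) (hn : 2 ≤ n) (τ : ℝ) (hτ : (n : ℝ) ≤ τ)
    (a b : ℝ) :
    (∀ s : ℝ, ((n : ℝ) + 1) / (τ + 1) < s →
      μH[s] {x : ℝ | x ∈ Set.Icc a b ∧
        {α : ℝ | IsAlgebraicOfDegree n α ∧
          |x - α| < (algHeight n α : ℝ) ^ (-τ - 1)}.Infinite} = 0) ∧
      dimH {x : ℝ | x ∈ Set.Icc a b ∧
        {α : ℝ | IsAlgebraicOfDegree n α ∧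
          |x - α| < (algHeight n α : ℝ) ^ (-τ - 1)}.Infinite} ≤
        ENNReal.ofReal (((n : ℝ) + 1) / (τ + 1)) :=
  baker_schmidt_upper_general n τ hτ a b
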